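/- arXiv:1303.4263 — 3 statements merged into one kernel-verified Lean document; each statement's English description precedes it below -/
import Mathlib

section
/- Let A = D² + M_{X³+α} acting on smooth real functions (or formal differential operators), with α a real constant, and let L = A² + 2·M_X and M = A³ + 3·M_X∘D² + 3·D + 3·M_{X(X³+α)}. Then L and M commute: L∘M = M∘L. -/
open Polynomial

/-!
Write `d = D`, `x = M_X`, `b = M_p`, `t = M_{p'}` and `A = d² + b`. The commutators
`[d, x] = 1`, `[d, b] = t`, `[d, t] = 6x` (the only place where `p = X³ + α` enters, through
`p'' = 6X`) and `[x, b] = [b, t] = 0` give `[A, x] = 2d`, `[A, d] = -t`, `[A, t] = 12xd + 6`.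
Then `[A² + 2x, A³ + 3(xA + d)] = 3[A², x]A + 3[A², d] - 2[A³, x] - 6x[A, x] - 6[d, x]`,
and after normal ordering the coefficients of `dA²`, `tA`, `xd` and `1` each cancel.
-/

section Relations

variable {R : Type*} [Ring R]

theorem commute_dixmier_of_relations {a x d t : R} (hax : a * x = x * a + 2 * d)
    (had : a * d = d * a - t) (hat : a * t = t * a + 12 * (x * d) + 6)
    (hdx : d * x = x * d + 1) :
    Commute (a ^ 2 + 2 * x) (a ^ 3 + 3 * (x * a + d)) := by
  have ha2x : a ^ 2 * x = x * a ^ 2 + 4 * (d * a) - 2 * t := by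
    linear_combination (norm := noncomm_ring) a * hax + hax * a + 2 * had
  have ha2d : a ^ 2 * d = d * a ^ 2 - 2 * (t * a) - 12 * (x * d) - 6 := by
    linear_combination (norm := noncomm_ring) a * had + had * a - hat
  have ha3x : a ^ 3 * x = x * a ^ 3 + 6 * (d * a ^ 2) - 6 * (t * a) - 24 * (x * d) - 12 := by
    linear_combination (norm := (noncomm_ring; norm_num)) a ^ 2 * hax + ha2x * a + 2 * ha2d
  rw [commute_iff_eq]
  linear_combination (norm := (noncomm_ring; norm_num))
    3 * ha2x * a + 3 * ha2d - 2 * ha3x - 6 * x * hax - 6 * hdx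

theorem commute_dixmier_of_weyl {d x b t : R} (hdx : d * x = x * d + 1)
    (hdb : d * b = b * d + t) (hdt : d * t = t * d + 6 * x) (hxb : Commute x b)
    (hbt : Commute b t) :
    Commute ((d ^ 2 + b) ^ 2 + 2 * x) ((d ^ 2 + b) ^ 3 + 3 * (x * (d ^ 2 + b) + d)) := by
  refine commute_dixmier_of_relations (t := t) ?_ ?_ ?_ hdx
  · linear_combination (norm := noncomm_ring) d * hdx + hdx * d - hxb.eq
  · linear_combination (norm := noncomm_ring) -hdb
  · linear_combination (norm := (noncomm_ring; norm_num)) d * hdt + hdt * d + 6 * hdx + hbt.eq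

end Relations

section Operators

variable {R : Type*} [CommRing R]

theorem derivative_mul_mulLeft (f : R[X]) :
    (derivative : Module.End R R[X]) * LinearMap.mulLeft R f =
      LinearMap.mulLeft R f * derivative + LinearMap.mulLeft R (derivative f) := by
  refine LinearMap.ext fun q => ?_
  simp [derivative_mul, add_comm]

theorem commute_mulLeft_mulLeft (f g : R[X]) :
    Commute (LinearMap.mulLeft R f) (LinearMap.mulLeft R g) :=
  (Commute.all f g).map (Algebra.lmul R R[X])

theorem commute_dixmier_of_derivative_derivative_eq {p : R[X]}
    (hp : derivative (derivative p) = 6 * X) :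
    Commute (((derivative : Module.End R R[X]) ^ 2 + LinearMap.mulLeft R p) ^ 2 +
        2 * LinearMap.mulLeft R X)
      (((derivative : Module.End R R[X]) ^ 2 + LinearMap.mulLeft R p) ^ 3 +
        3 * (LinearMap.mulLeft R X * (derivative ^ 2 + LinearMap.mulLeft R p) + derivative)) := by
  have h6X : LinearMap.mulLeft R (6 * X : R[X]) = 6 * LinearMap.mulLeft R X := by
    refine LinearMap.ext fun q => ?_
    simp
  refine commute_dixmier_of_weyl ?_ (derivative_mul_mulLeft p) ?_
    (commute_mulLeft_mulLeft _ _) (commute_mulLeft_mulLeft _ _)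
  · simpa [Module.End.one_eq_id] using derivative_mul_mulLeft (X : R[X])
  · rw [← h6X, ← hp]
    exact derivative_mul_mulLeft _

end Operators

/-- The Dixmier operators of rank 2, genus 1 commute: with
`A = D² + M_{X³+α}`, `L = A² + 2 M_X` and `M = A³ + 3 M_X D² + 3 D + 3 M_{X(X³+α)}`,
one has `L ∘ M = M ∘ L` (as formal differential operators, i.e. endomorphisms
of `ℝ[X]` generated by differentiation and multiplication operators). -/
theorem dixmier_rank2_commute (α : ℝ) :
    let D : Module.End ℝ ℝ[X] := Polynomial.derivative
    let MX : Module.End ℝ ℝ[X] := LinearMap.mulLeft ℝ (X : ℝ[X])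
    let A : Module.End ℝ ℝ[X] := D ^ 2 + LinearMap.mulLeft ℝ ((X : ℝ[X]) ^ 3 + C α)
    let L : Module.End ℝ ℝ[X] := A ^ 2 + 2 • MX
    let M : Module.End ℝ ℝ[X] :=
      A ^ 3 + 3 • (MX * D ^ 2) + 3 • D +
        3 • LinearMap.mulLeft ℝ ((X : ℝ[X]) * ((X : ℝ[X]) ^ 3 + C α))
    L * M = M * L := by
  intro D MX A L M
  have hL : L = A ^ 2 + 2 * MX := by
    simp only [L, nsmul_eq_mul, Nat.cast_ofNat]
  have hM : M = A ^ 3 + 3 * (MX * A + D) := by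
    simp only [M, A, nsmul_eq_mul, Nat.cast_ofNat, LinearMap.mulLeft_mul,
      ← Module.End.mul_eq_comp]
    noncomm_ring
  have hp : derivative (derivative ((X : ℝ[X]) ^ 3 + C α)) = 6 * X := by
    simp only [derivative_add, derivative_C, add_zero, derivative_X_pow, derivative_C_mul,
      ← mul_assoc, ← C_mul]
    norm_num [map_ofNat C]
  rw [hL, hM]
  exact (commute_dixmier_of_derivative_derivative_eq hp).eq
end

section
/- With L and M the Dixmier operators of rank 2, genus 1, namely L = (D² + X³ + α)² + 2X and M = (D² + X³ + α)³ + 3X·D² + 3D + 3X(X³+α), the hyperelliptic relation M² = L³ - α·Id holds. -/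
set_option maxHeartbeats 2000000 in
/-- The Dixmier operators of rank 2, genus 1 satisfy the hyperelliptic relation
`M² = L³ - α·Id`, in any ℝ-algebra with elements `D`, `X` satisfying `[D, X] = 1`
(e.g. the Weyl algebra, or differential operators acting on smooth functions). -/
theorem dixmier_rank2_hyperelliptic (W : Type*) [Ring W] [Algebra ℝ W]
    (D X : W) (h : D * X - X * D = 1) (α : ℝ) (hα : α ≠ 0) :
    let A : W := D ^ 2 + X ^ 3 + algebraMap ℝ W α
    let L : W := A ^ 2 + 2 * X
    let M : W := A ^ 3 + 3 * X * D ^ 2 + 3 * D + 3 * (X * (X ^ 3 + algebraMap ℝ W α))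
    M ^ 2 = L ^ 3 - algebraMap ℝ W α := by
  intro A L M
  have h1 : D * X = X * D + 1 := by rw [← h]; abel
  have h2 : ∀ t : W, D * (X * t) = X * (D * t) + t := fun t => by
    rw [← mul_assoc, h1, add_mul, one_mul, mul_assoc]
  have c2 : ∀ t : W, (2 : W) * t = (2:ℝ) • t := fun t => by
    rw [Algebra.smul_def, map_ofNat]
  have c3 : ∀ t : W, (3 : W) * t = (3:ℝ) • t := fun t => by
    rw [Algebra.smul_def, map_ofNat]
  have hXD : X * D = D * X - 1 := by rw [h1]; abel
  have hXDD : X * (D * D) = D * (D * X) - (2:ℝ) • D := by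
    rw [← mul_assoc, hXD, sub_mul, one_mul, mul_assoc, h1, mul_add, mul_one, ← mul_assoc,
      two_smul]
    abel
  -- key abstract identity
  have key : ∀ B : W, X * B = B * X - (2:ℝ) • D → D * B = B * D + (3:ℝ) • (X * X) →
      (B ^ 3 + (3:ℝ) • (X * B) + (3:ℝ) • D) ^ 2
        = (B ^ 2 + (2:ℝ) • X) ^ 3 + (D * D + X * (X * X)) - B := by
    intro B hXB hDB
    have hXB' : ∀ t : W, X * (B * t) = B * (X * t) - (2:ℝ) • (D * t) := fun t => by
      rw [← mul_assoc, hXB, sub_mul, smul_mul_assoc, mul_assoc]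
    have hDB' : ∀ t : W, D * (B * t) = B * (D * t) + (3:ℝ) • (X * (X * t)) := fun t => by
      rw [← mul_assoc, hDB, add_mul, smul_mul_assoc]
      simp only [mul_assoc]
    simp only [pow_succ, pow_zero, one_mul, mul_add, add_mul, mul_sub, sub_mul,
      smul_mul_assoc, mul_smul_comm, mul_assoc, smul_add, smul_sub, smul_smul,
      hXB', hDB', h2, hXB, hDB, h1]
    simp only [mul_one, one_mul]
    module
  -- commutator facts for A
  have hca : ∀ t : W, algebraMap ℝ W α * t = t * algebraMap ℝ W α := fun t =>
    Algebra.commutes α t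
  have hXA : X * A = A * X - (2:ℝ) • D := by
    show X * (D ^ 2 + X ^ 3 + algebraMap ℝ W α)
        = (D ^ 2 + X ^ 3 + algebraMap ℝ W α) * X - (2:ℝ) • D
    simp only [pow_succ, pow_zero, one_mul, mul_add, add_mul, mul_assoc]
    rw [hXDD, hca X]
    abel
  have hDA : D * A = A * D + (3:ℝ) • (X * X) := by
    show D * (D ^ 2 + X ^ 3 + algebraMap ℝ W α)
        = (D ^ 2 + X ^ 3 + algebraMap ℝ W α) * D + (3:ℝ) • (X * X)
    simp only [pow_succ, pow_zero, one_mul, mul_add, add_mul, mul_assoc]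
    rw [h2 (X * X), h2 X, h1, hca D,
      show (3:ℝ) • (X * X) = X * X + (X * X + X * X) by
        rw [show (3:ℝ) = 1 + (1 + 1) by norm_num, add_smul, add_smul, one_smul]]
    simp only [mul_add, add_mul, mul_assoc, mul_one, one_mul]
    abel
  have hM : M = A ^ 3 + (3:ℝ) • (X * A) + (3:ℝ) • D := by
    show A ^ 3 + 3 * X * D ^ 2 + 3 * D + 3 * (X * (X ^ 3 + algebraMap ℝ W α)) = _
    rw [mul_assoc, c3 (X * D ^ 2), c3 D, c3 (X * (X ^ 3 + algebraMap ℝ W α))]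
    show _ = A ^ 3 + (3:ℝ) • (X * (D ^ 2 + X ^ 3 + algebraMap ℝ W α)) + (3:ℝ) • D
    simp only [mul_add, smul_add]
    abel
  have hL : (L:W) = A ^ 2 + (2:ℝ) • X := by
    show A ^ 2 + 2 * X = _
    rw [c2 X]
  have hfin : ∀ C : W, C + (D * D + X * (X * X)) - A = C - algebraMap ℝ W α := fun C => by
    show C + (D * D + X * (X * X)) - (D ^ 2 + X ^ 3 + algebraMap ℝ W α) = _
    simp only [pow_succ, pow_zero, one_mul, mul_assoc]
    abel
  rw [hM, hL, key A hXA hDA, hfin]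
end

section
/- In the Weyl algebra over ℝ (generated by p, q with [p,q]=1), the element L = (p² + q³ + α)² + 2q generates together with M = (p² + q³ + α)³ + 3q·p² + 3p + 3q(q³+α) a commutative subalgebra: [L, M] = 0. -/
set_option maxHeartbeats 1000000 in
/-- In the Weyl algebra over ℝ (any ℝ-algebra with generators `p`, `q` satisfying
`[p,q] = 1`), the Dixmier elements `L = (p² + q³ + α)² + 2q` and
`M = (p² + q³ + α)³ + 3q p² + 3p + 3q(q³+α)` commute: `[L, M] = 0`. -/
theorem dixmier_weyl_commute (W : Type*) [Ring W] [Algebra ℝ W]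
    (p q : W) (h : p * q - q * p = 1) (α : ℝ) :
    let L : W := (p ^ 2 + q ^ 3 + algebraMap ℝ W α) ^ 2 + 2 * q
    let M : W := (p ^ 2 + q ^ 3 + algebraMap ℝ W α) ^ 3 + 3 * q * p ^ 2 + 3 * p +
      3 * (q * (q ^ 3 + algebraMap ℝ W α))
    L * M - M * L = 0 := by
  intro L M
  have hpq : p * q = q * p + 1 := by
    have := sub_eq_iff_eq_add.mp h; rw [this, add_comm]
  have hpq' : ∀ x : W, p * (q * x) = q * (p * x) + x := by
    intro x; rw [← mul_assoc, hpq, add_mul, one_mul, mul_assoc]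
  obtain ⟨c, hcdef⟩ : ∃ c : W, algebraMap ℝ W α = c := ⟨_, rfl⟩
  have hpc : p * c = c * p := by rw [← hcdef]; exact (Algebra.commutes α p).symm
  have hpc' : ∀ x : W, p * (c * x) = c * (p * x) := by
    intro x; rw [← mul_assoc, hpc, mul_assoc]
  have hqc : q * c = c * q := by rw [← hcdef]; exact (Algebra.commutes α q).symm
  have hqc' : ∀ x : W, q * (c * x) = c * (q * x) := by
    intro x; rw [← mul_assoc, hqc, mul_assoc]
  obtain ⟨A, hA⟩ : ∃ A : W, A = p ^ 2 + q ^ 3 + c := ⟨_, rfl⟩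
  have hAq : A * q = q * A + 2 * p := by
    rw [hA]
    simp only [pow_succ, pow_zero, one_mul, add_mul, mul_add, mul_assoc, hpq, hpq',
      hqc, hqc', mul_one]
    noncomm_ring
  have hAq' : ∀ x : W, A * (q * x) = q * (A * x) + 2 * (p * x) := by
    intro x; rw [← mul_assoc, hAq, add_mul]; simp only [mul_assoc]
  have hAp : A * p = p * A - 3 * (q * q) := by
    rw [hA]
    simp only [pow_succ, pow_zero, one_mul, add_mul, mul_add, mul_assoc, hpq, hpq',
      hpc, hpc', hqc, hqc', mul_one]
    noncomm_ring
  have hAp' : ∀ x : W, A * (p * x) = p * (A * x) - 3 * (q * (q * x)) := by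
    intro x; rw [← mul_assoc, hAp, sub_mul]; simp only [mul_assoc]
  have hAc : A * c = c * A := by
    rw [hA]; simp only [add_mul, mul_add, pow_succ, pow_zero, one_mul, mul_assoc,
      hpc, hpc', hqc, hqc']
  have hAc' : ∀ x : W, A * (c * x) = c * (A * x) := by
    intro x; rw [← mul_assoc, hAc, mul_assoc]
  have hM : M = A ^ 3 + 3 * (q * A) + 3 * p := by
    simp only [M, hcdef, hA]; noncomm_ring
  have hL : L = A ^ 2 + 2 * q := by simp only [L, hcdef, hA]
  rw [hM, hL]
  simp only [pow_succ, pow_zero, one_mul, add_mul, mul_add, mul_sub, sub_mul, mul_assoc,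
    hpq, hpq', hpc, hpc', hqc, hqc', hAq, hAq', hAp, hAp', hAc, hAc', mul_one]
  noncomm_ring
  repeat (simp only [pow_succ, pow_zero, one_mul, add_mul, mul_add, mul_sub, sub_mul, mul_assoc,
    hpq, hpq', hpc, hpc', hqc, hqc', hAq, hAq', hAp, hAp', hAc, hAc', mul_one]
          noncomm_ring)
  norm_num [zsmul_eq_mul]
end
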